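/- arXiv:0708.2349 — 6 statements merged into one kernel-verified Lean document; each statement's English description precedes it below -/
import Mathlib

section
/- Let t₁ < t₂ be integers and let a₁ < a₂ < ⋯ < a_N and b₁ < b₂ < ⋯ < b_N be integers. Then the number of non-intersecting families (p₁,…,p_N) of lattice paths in which p_i goes from (t₁, a_i) to (t₂, b_i) equals det_{i,j=1,…,N}[ C(t₂−t₁, b_i − a_j) ], where C(n,k) is the binomial coefficient (equal to 0 when k < 0 or k > n). -/
/-!
Induction on `t₂ - t₁`. Since every step is `0` or `1`, the positions `c` of a family at time
`t₂ - 1` satisfy `c i ∈ {b i - 1, b i}`, and removing the last step identifies the families ending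
at `b` with the disjoint union over such `c` of the families ending at `c`. When `c` is injective
it is automatically increasing, because `b` is; when it is not, there are no families ending at
`c`. On the determinant side, Pascal's rule writes row `i` of `[C(n + 1, b i - a j)]` as the sum of
the rows indexed by `b i - 1` and `b i` of `[C(n, x - a j)]`, so multilinearity expands the
determinant over the same choices of `c`, and non-injective `c` give repeated rows. For
`t₁ = t₂` the matrix is `[b i = a j]`, whose determinant is `1` if `a = b` and `0` otherwise.
-/

/-- The binomial coefficient `C(n,k)` for integer arguments, equal to `0` when `k < 0`
or `k > n`. -/
def binomZ (n k : ℤ) : ℤ := if 0 ≤ k ∧ k ≤ n then (Nat.choose n.toNat k.toNat : ℤ) else 0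

open Finset Function Matrix

theorem binomZ_natCast (n k : ℕ) : binomZ n k = n.choose k := by
  unfold binomZ
  split_ifs with h
  · simp
  · rw [Nat.choose_eq_zero_of_lt (by omega), Nat.cast_zero]

theorem binomZ_of_neg (n : ℤ) {k : ℤ} (hk : k < 0) : binomZ n k = 0 :=
  if_neg (by omega)

theorem binomZ_zero_left (k : ℤ) : binomZ 0 k = if k = 0 then 1 else 0 := by
  unfold binomZ
  split_ifs <;> first | omega | simp_all

theorem binomZ_succ (n : ℕ) (k : ℤ) : binomZ (n + 1) k = binomZ n (k - 1) + binomZ n k := by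
  rcases lt_trichotomy k 0 with hk | rfl | hk
  · simp [binomZ_of_neg, hk, show k - 1 < 0 by omega]
  · rw [binomZ_of_neg _ (by norm_num : (0 : ℤ) - 1 < 0), ← Nat.cast_succ, ← Nat.cast_zero,
      binomZ_natCast, binomZ_natCast]
    simp
  · obtain ⟨k, rfl⟩ : ∃ m : ℕ, k = m + 1 := ⟨(k - 1).toNat, by omega⟩
    rw [add_sub_cancel_right, ← Nat.cast_succ, ← Nat.cast_succ, binomZ_natCast, binomZ_natCast,
      binomZ_natCast, Nat.choose_succ_succ, Nat.cast_add]

theorem binomZ_succ_eq_sum_Icc (n : ℕ) (m k : ℤ) :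
    binomZ (n + 1) (m - k) = ∑ x ∈ Icc (m - 1) m, binomZ n (x - k) := by
  rw [show Icc (m - 1) m = {m - 1, m} by ext; simp; omega, sum_pair (by omega), binomZ_succ,
    sub_right_comm]

theorem Matrix.det_of_sum_rows {ι κ R : Type*} [Fintype ι] [DecidableEq ι] [DecidableEq κ]
    [CommRing R] (s : ι → Finset κ) (f : ι → κ → ι → R) :
    det (of fun i j => ∑ x ∈ s i, f i x j) =
      ∑ c ∈ Fintype.piFinset s, det (of fun i j => f i (c i) j) := by
  have := (detRowAlternating : (ι → R) [⋀^ι]→ₗ[R] R).toMultilinearMap.map_sum_finset f s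
  convert this using 2
  · congr 1
    ext i j
    simp [Finset.sum_apply]
  · rfl

theorem Matrix.det_of_ite_eq {ι α R : Type*} [Fintype ι] [LinearOrder ι] [LinearOrder α]
    [CommRing R] {a b : ι → α} (ha : StrictMono a) (hb : StrictMono b) :
    det (of fun i j => if b i = a j then (1 : R) else 0) = if a = b then 1 else 0 := by
  have perm_eq_one (σ : Equiv.Perm ι) : (∀ i, b (σ i) = a i) ↔ σ = 1 ∧ a = b := by
    constructor
    · intro h
      have hσ : StrictMono σ := fun i j hij => by
        rw [← hb.lt_iff_lt, h, h]
        exact ha hij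
      obtain rfl : σ = 1 := Equiv.ext fun i => hσ.apply_eq
      exact ⟨rfl, funext fun i => (h i).symm⟩
    · rintro ⟨rfl, rfl⟩ i
      rfl
  rw [det_apply']
  simp only [of_apply, prod_boole, mem_univ, true_imp_iff, perm_eq_one]
  rw [sum_eq_single 1 (fun σ _ hσ => by simp [hσ]) (by simp)]
  simp

section LatticePaths

variable {ι : Type*} {t₁ t₂ : ℤ} {a b c : ι → ℤ} {p : ι → ℤ → ℤ}

/-- A path is a function `ℤ → ℤ` that is constant outside `{t₁, …, t₂}`, so that it is determined
by its restriction to `{t₁, …, t₂}`. -/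
structure IsNonIntersectingFamily (t₁ t₂ : ℤ) (a b : ι → ℤ) (p : ι → ℤ → ℤ) : Prop where
  eq_start : ∀ i r, r ≤ t₁ → p i r = a i
  eq_end : ∀ i r, t₂ ≤ r → p i r = b i
  step : ∀ i, ∀ r ∈ Ico t₁ t₂, p i (r + 1) - p i r = 0 ∨ p i (r + 1) - p i r = 1
  ne : ∀ i j, i ≠ j → ∀ r ∈ Icc t₁ t₂, p i r ≠ p j r

variable (ι) in
abbrev NonIntersectingFamily (t₁ t₂ : ℤ) (a b : ι → ℤ) : Type _ :=
  {p : ι → ℤ → ℤ // IsNonIntersectingFamily t₁ t₂ a b p}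

namespace IsNonIntersectingFamily

theorem injective_end (hp : IsNonIntersectingFamily t₁ t₂ a b p) (ht : t₁ ≤ t₂) :
    Injective b := by
  intro i j hij
  by_contra hne
  exact hp.ne i j hne t₂ (by simp [ht])
    (by rw [hp.eq_end i t₂ le_rfl, hp.eq_end j t₂ le_rfl, hij])

theorem mem_Icc_penultimate (hp : IsNonIntersectingFamily t₁ (t₂ + 1) a b p)
    (ht : t₁ ≤ t₂) (i : ι) : p i t₂ ∈ Icc (b i - 1) (b i) := by
  have := hp.step i t₂ (by simp [ht])
  rw [hp.eq_end i _ le_rfl] at this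
  simp only [mem_Icc]
  omega

theorem truncate (hp : IsNonIntersectingFamily t₁ (t₂ + 1) a b p) :
    IsNonIntersectingFamily t₁ t₂ a (fun i => p i t₂) (fun i r => p i (min r t₂)) where
  eq_start i r hr := hp.eq_start i _ (by omega)
  eq_end i r hr := by rw [min_eq_right hr]
  step i r hr := by
    simp only [mem_Ico] at hr
    rw [min_eq_left (by omega), min_eq_left (by omega)]
    exact hp.step i r (by simp only [mem_Ico]; omega)
  ne i j hij r hr := by
    simp only [mem_Icc] at hr
    rw [min_eq_left hr.2]
    exact hp.ne i j hij r (by simp only [mem_Icc]; omega)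

theorem extend (hq : IsNonIntersectingFamily t₁ t₂ a c p) (ht : t₁ ≤ t₂)
    (hb : Injective b) (hc : ∀ i, c i ∈ Icc (b i - 1) (b i)) :
    IsNonIntersectingFamily t₁ (t₂ + 1) a b (fun i r => if t₂ < r then b i else p i r) where
  eq_start i r hr := by rw [if_neg (by omega), hq.eq_start i r hr]
  eq_end i r hr := if_pos (by omega)
  step i r hr := by
    simp only [mem_Ico] at hr
    rcases eq_or_lt_of_le (Int.lt_add_one_iff.mp hr.2) with rfl | hr'
    · have := mem_Icc.mp (hc i)
      rw [if_pos (by omega), if_neg (lt_irrefl _), hq.eq_end i r le_rfl]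
      omega
    · rw [if_neg (by omega), if_neg (by omega)]
      exact hq.step i r (by simp only [mem_Ico]; omega)
  ne i j hij r hr := by
    simp only [mem_Icc] at hr
    split_ifs
    · exact hb.ne hij
    · exact hq.ne i j hij r (by simp only [mem_Icc]; omega)

end IsNonIntersectingFamily

namespace NonIntersectingFamily

theorem isEmpty_of_not_injective (ht : t₁ ≤ t₂) (hb : ¬ Injective b) :
    IsEmpty (NonIntersectingFamily ι t₁ t₂ a b) :=
  ⟨fun p => hb (p.2.injective_end ht)⟩

theorem subsingleton (t : ℤ) : Subsingleton (NonIntersectingFamily ι t t a b) := by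
  refine ⟨fun p q => Subtype.ext (funext₂ fun i r => ?_)⟩
  rcases le_total r t with hr | hr
  · rw [p.2.eq_start i r hr, q.2.eq_start i r hr]
  · rw [p.2.eq_end i r hr, q.2.eq_end i r hr]

theorem card_self (t : ℤ) (ha : Injective a) [DecidableEq (ι → ℤ)] :
    Nat.card (NonIntersectingFamily ι t t a b) = if a = b then 1 else 0 := by
  have := subsingleton (ι := ι) (a := a) (b := b) t
  split_ifs with hab
  · subst hab
    refine Nat.card_eq_one_iff_unique.mpr ⟨this, ⟨⟨fun i _ => a i, ?_⟩⟩⟩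
    exact ⟨fun _ _ _ => rfl, fun _ _ _ => rfl, by simp, fun i j hij _ _ => ha.ne hij⟩
  · have : IsEmpty (NonIntersectingFamily ι t t a b) := ⟨fun p => hab <| funext fun i => by
      rw [← p.2.eq_start i t le_rfl, p.2.eq_end i t le_rfl]⟩
    exact Nat.card_of_isEmpty

variable [Fintype ι] [DecidableEq ι]

def equivSigma (ht : t₁ ≤ t₂) (hb : Injective b) :
    NonIntersectingFamily ι t₁ (t₂ + 1) a b ≃
      Σ c : Fintype.piFinset (fun i => Icc (b i - 1) (b i)),
        NonIntersectingFamily ι t₁ t₂ a c where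
  toFun p := ⟨⟨fun i => p.1 i t₂, Fintype.mem_piFinset.mpr (p.2.mem_Icc_penultimate ht)⟩,
    ⟨_, p.2.truncate⟩⟩
  invFun q := ⟨_, q.2.2.extend ht hb (Fintype.mem_piFinset.mp q.1.2)⟩
  left_inv p := by
    refine Subtype.ext (funext₂ fun i r => ?_)
    dsimp only
    split_ifs with hr
    · exact (p.2.eq_end i r hr).symm
    · rw [min_eq_left (not_lt.mp hr)]
  right_inv q := by
    refine Sigma.subtype_ext (Subtype.ext (funext fun i => ?_)) (funext₂ fun i r => ?_)
    · simp [q.2.2.eq_end i t₂ le_rfl]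
    · simp only [if_neg (min_le_right r t₂).not_gt]
      rcases le_total r t₂ with hr | hr
      · rw [min_eq_left hr]
      · rw [min_eq_right hr, q.2.2.eq_end i r hr, q.2.2.eq_end i t₂ le_rfl]

theorem finite (t : ℤ) (n : ℕ) (a b : ι → ℤ) :
    Finite (NonIntersectingFamily ι t (t + n) a b) := by
  induction n generalizing b with
  | zero =>
    have := subsingleton (ι := ι) (a := a) (b := b) t
    rw [Nat.cast_zero, add_zero]
    infer_instance
  | succ n ih =>
    rw [Nat.cast_succ, ← add_assoc]
    by_cases hb : Injective b
    · exact Finite.of_equiv _ (equivSigma (by omega) hb).symm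
    · have := isEmpty_of_not_injective (ι := ι) (a := a) (by omega : t ≤ t + n + 1) hb
      infer_instance

end NonIntersectingFamily

end LatticePaths

theorem strictMono_of_mem_Icc {ι : Type*} [Preorder ι] {b c : ι → ℤ} (hb : StrictMono b)
    (hc : ∀ i, c i ∈ Icc (b i - 1) (b i)) (hinj : Injective c) : StrictMono c :=
  fun i j hij =>
    have := mem_Icc.mp (hc i)
    have := mem_Icc.mp (hc j)
    have := hb hij
    lt_of_le_of_ne (by omega) (hinj.ne hij.ne)

theorem NonIntersectingFamily.card_eq_det {ι : Type*} [Fintype ι] [LinearOrder ι]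
    (t : ℤ) (n : ℕ) {a b : ι → ℤ} (ha : StrictMono a) (hb : StrictMono b) :
    (Nat.card (NonIntersectingFamily ι t (t + n) a b) : ℤ) =
      det (of fun i j => binomZ n (b i - a j)) := by
  induction n generalizing b with
  | zero =>
    simp only [Nat.cast_zero, add_zero, binomZ_zero_left, sub_eq_zero]
    rw [card_self t ha.injective, det_of_ite_eq ha hb]
    split_ifs <;> rfl
  | succ n ih =>
    have (c : ι → ℤ) := NonIntersectingFamily.finite t n a c
    calc (Nat.card (NonIntersectingFamily ι t (t + (n + 1 : ℕ)) a b) : ℤ)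
        = ∑ c ∈ Fintype.piFinset (fun i => Icc (b i - 1) (b i)),
            (Nat.card (NonIntersectingFamily ι t (t + n) a c) : ℤ) := by
          rw [Nat.cast_succ, ← add_assoc, Nat.card_congr (equivSigma (by omega) hb.injective),
            Nat.card_sigma, Nat.cast_sum]
          exact sum_coe_sort _ fun c => (Nat.card (NonIntersectingFamily ι t (t + n) a c) : ℤ)
      _ = ∑ c ∈ Fintype.piFinset (fun i => Icc (b i - 1) (b i)),
            det (of fun i j => binomZ n (c i - a j)) := by
          refine sum_congr rfl fun c hc => ?_
          rw [Fintype.mem_piFinset] at hc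
          by_cases hinj : Injective c
          · exact ih (strictMono_of_mem_Icc hb hc hinj)
          · obtain ⟨i, j, hcij, hij⟩ := not_injective_iff.mp hinj
            have := isEmpty_of_not_injective (ι := ι) (a := a) (by omega : t ≤ t + n) hinj
            rw [Nat.card_of_isEmpty, Nat.cast_zero,
              det_zero_of_row_eq hij (funext fun k => by simp [hcij])]
      _ = det (of fun i j => binomZ (n + 1 : ℕ) (b i - a j)) := by
          simp only [Nat.cast_succ, binomZ_succ_eq_sum_Icc]
          exact (det_of_sum_rows (fun i => Icc (b i - 1) (b i))
            fun _ x j => binomZ n (x - a j)).symm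

/-- Lindström–Gessel–Viennot: the number of non-intersecting families `(p₁,…,p_N)` of
lattice paths, where `p_i` goes from `(t₁, a_i)` to `(t₂, b_i)` with steps
`p(r+1) − p(r) ∈ {0,1}`, equals `det[C(t₂−t₁, b_i − a_j)]`.  (A path is encoded as a
function `ℤ → ℤ`, normalized to be constant outside `{t₁,…,t₂}` so that it is
determined by its restriction to `{t₁,…,t₂}`.) -/
theorem stmt_0 (N : ℕ) (t₁ t₂ : ℤ) (ht : t₁ < t₂)
    (a b : Fin N → ℤ) (ha : StrictMono a) (hb : StrictMono b) :
    (Nat.card {p : Fin N → ℤ → ℤ //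
        (∀ i r, r ≤ t₁ → p i r = a i) ∧
        (∀ i r, t₂ ≤ r → p i r = b i) ∧
        (∀ i, ∀ r ∈ Finset.Ico t₁ t₂, p i (r + 1) - p i r = 0 ∨ p i (r + 1) - p i r = 1) ∧
        (∀ i j, i ≠ j → ∀ r ∈ Finset.Icc t₁ t₂, p i r ≠ p j r)} : ℤ)
      = Matrix.det (Matrix.of fun i j : Fin N => binomZ (t₂ - t₁) (b i - a j)) := by
  obtain ⟨n, rfl⟩ : ∃ n : ℕ, t₂ = t₁ + n := ⟨(t₂ - t₁).toNat, by omega⟩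
  rw [add_sub_cancel_left, ← NonIntersectingFamily.card_eq_det t₁ n ha hb]
  exact congrArg Nat.cast <| Nat.card_congr <|
    Equiv.subtypeEquivRight (q := IsNonIntersectingFamily t₁ (t₁ + n) a b) fun p =>
      ⟨fun ⟨h₁, h₂, h₃, h₄⟩ => ⟨h₁, h₂, h₃, h₄⟩, fun h => ⟨h.1, h.2, h.3, h.4⟩⟩
end

section
/- Let N ≥ 1 and 0 ≤ S ≤ T, 0 ≤ t ≤ T be integers, and let z₁ < z₂ < ⋯ < z_N be integers with max(0, S+t−T) ≤ z_i ≤ min(t,S)+N−1 for all i. Then det_{i,j=1,…,N}[C(t, z_i+1−j)] · det_{i,j=1,…,N}[C(T−t, S+i−1−z_j)] = det_{i,j=1,…,N}[C(T, S+i−j)] · ∏_{1≤i<j≤N}(z_i−z_j)² · ∏_{i=1}^{N} 1/( z_i!·(t−z_i+N−1)!·(S−z_i+N−1)!·(T−t−S+z_i)! ) · ∏_{i=1}^{N} ( (t+1)_{i−1}(T−t+1)_{i−1}(S−i+N)!(T−S+i−1)! )/( (T+1)_{i−1}(i−1)! ) · ( t!(T−t)!/T! )^N, where C(n,k) is the binomial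 coefficient (equal to 0 when k < 0 or k > n). Consequently the one-dimensional distribution of the path model at time t is a Hahn orthogonal polynomial ensemble. -/
/-- The binomial coefficient `C(n,k)` for integer arguments (as a rational number),
equal to `0` when `k < 0` or `k > n`. -/
def binomQ (n k : ℤ) : ℚ := if 0 ≤ k ∧ k ≤ n then (Nat.choose n.toNat k.toNat : ℚ) else 0

/-- The factorial of an integer (for nonnegative arguments), as a rational number. -/
def zfact (n : ℤ) : ℚ := (Nat.factorial n.toNat : ℚ)

/-- The Pochhammer symbol `(a)_i = a(a+1)⋯(a+i−1)`, with `(a)_0 = 1`. -/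
def pochQ (a : ℚ) (i : ℕ) : ℚ := ∏ j ∈ Finset.range i, (a + j)

/-!
Each of the three determinants has the form `det[C(u, y_i - j)]` (for the two whose rows are
indexed by `S + i`, after transposing and using `C(n, k) = C(n, n - k)`). For `0 ≤ x ≤ u + N - 1`,
`C(u, x - j) = u! / (x! (u - x + N - 1)!) · P_j(x)` with
`P_j(x) = x(x-1)⋯(x-j+1) · (u+j+1-x)⋯(u+N-1-x)` of degree `< N`, so the determinant is the
product of these prefactors, the Vandermonde determinant of the `y_i`, and the determinant of the
coefficient matrix of `(P_j)`. Evaluating at `y = (0, …, N-1)`, where `(P_j(y_i))` is triangular,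
shows the latter is `∏ᵢ (u+1)_i`. The identity then reduces to a factorwise comparison of products.
-/

open Finset Polynomial

lemma zfact_ne_zero (n : ℤ) : zfact n ≠ 0 := by
  simp [zfact, Nat.factorial_ne_zero]

lemma pochQ_eq_eval_ascPochhammer (a : ℚ) (i : ℕ) : pochQ a i = (ascPochhammer ℚ i).eval a := by
  induction i with
  | zero => simp [pochQ]
  | succ i ih => rw [pochQ, prod_range_succ, ← pochQ, ih, ascPochhammer_succ_eval]

lemma pochQ_ne_zero {a : ℚ} (ha : 0 < a) (i : ℕ) : pochQ a i ≠ 0 :=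
  prod_ne_zero_iff.mpr fun j _ => by positivity

lemma binomQ_symm (n k : ℤ) (hn : 0 ≤ n) : binomQ n k = binomQ n (n - k) := by
  unfold binomQ
  by_cases h : 0 ≤ k ∧ k ≤ n
  · rw [if_pos h, if_pos ⟨by omega, by omega⟩, show (n - k).toNat = n.toNat - k.toNat by omega,
      Nat.choose_symm (by omega)]
  · rw [if_neg h, if_neg (by omega)]

namespace Matrix

variable {R : Type*} [CommRing R] {n : ℕ}

theorem det_eval_eq_det_vandermonde_mul (v : Fin n → R) (p : Fin n → R[X])
    (h_deg : ∀ j, (p j).natDegree < n) :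
    (of fun i j => (p j).eval (v i)).det =
      (vandermonde v).det * (of fun i j : Fin n => (p j).coeff i).det := by
  rw [← det_mul]
  congr 1
  ext i j
  rw [mul_apply, of_apply, eval_eq_sum_range' (h_deg j), ← Fin.sum_univ_eq_sum_range]
  simp [vandermonde_apply, mul_comm]

theorem det_vandermonde_sq (v : Fin n → R) :
    (vandermonde v).det ^ 2 = ∏ i, ∏ j ∈ Ioi i, (v i - v j) ^ 2 := by
  simp only [det_vandermonde, ← prod_pow]
  exact prod_congr rfl fun i _ => prod_congr rfl fun j _ => by ring

theorem det_vandermonde_natCast (n : ℕ) :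
    (vandermonde fun i : Fin n => ((i : ℕ) : R)).det = ∏ i : Fin n, ((i : ℕ).factorial : R) := by
  cases n with
  | zero => simp
  | succ n =>
    rw [det_vandermonde_id_eq_superFactorial, ← Nat.prod_range_succ_factorial,
      ← Fin.prod_univ_eq_prod_range, Nat.cast_prod]

theorem det_vandermonde_intCast_add (y : Fin n → ℤ) (a : ℤ) :
    (vandermonde fun i => ((y i + a : ℤ) : R)).det = (vandermonde fun i => (y i : R)).det := by
  simpa only [Int.cast_add] using det_vandermonde_add (fun i => (y i : R)) (a : R)

end Matrix

/-- `P_j(x) = x(x-1)⋯(x-j+1) · (u+j+1-x)(u+j+2-x)⋯(u+N-1-x)`; up to a factor depending only on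
`x`, it is `C(u, x - j)`. -/
noncomputable def binomPoly (u : ℚ) (N j : ℕ) : ℚ[X] :=
  descPochhammer ℚ j * (ascPochhammer ℚ (N - 1 - j)).comp (C (u + j + 1) - X)

lemma binomPoly_eval (u : ℚ) (N j : ℕ) (x : ℚ) :
    (binomPoly u N j).eval x =
      (descPochhammer ℚ j).eval x * (ascPochhammer ℚ (N - 1 - j)).eval (u + j + 1 - x) := by
  simp [binomPoly]

lemma natDegree_binomPoly_lt (u : ℚ) {N j : ℕ} (hj : j < N) : (binomPoly u N j).natDegree < N := by
  have hlin : (C (u + j + 1) - X).natDegree ≤ 1 :=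
    (natDegree_sub_le _ _).trans (by rw [natDegree_C, natDegree_X]; omega)
  have hcomp : ((ascPochhammer ℚ (N - 1 - j)).comp (C (u + j + 1) - X)).natDegree ≤ N - 1 - j :=
    natDegree_comp_le.trans <| by
      rw [ascPochhammer_natDegree]
      exact (Nat.mul_le_mul_left _ hlin).trans_eq (mul_one _)
  calc (binomPoly u N j).natDegree
      ≤ (descPochhammer ℚ j).natDegree + _ := natDegree_mul_le
    _ < N := by rw [descPochhammer_natDegree]; omega

lemma Nat.choose_sub_mul_factorial_mul_factorial_add {U m j : ℕ} (r : ℕ) (hjm : j ≤ m)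
    (hmU : m ≤ U + j) :
    U.choose (m - j) * m.factorial * (U + j - m + r).factorial =
      U.factorial * m.descFactorial j * (U + j - m + 1).ascFactorial r := by
  rw [← Nat.factorial_mul_descFactorial hjm, ← Nat.factorial_mul_ascFactorial,
    ← Nat.choose_mul_factorial_mul_factorial (show m - j ≤ U by omega),
    show U - (m - j) = U + j - m by omega]
  ring

lemma binomQ_eq_mul_eval_binomPoly {u x : ℤ} {N j : ℕ} (hu : 0 ≤ u) (hx : 0 ≤ x)
    (hxu : x ≤ u + N - 1) (hj : j < N) :
    binomQ u (x - j) =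
      zfact u / (zfact x * zfact (u - x + N - 1)) * (binomPoly (u : ℚ) N j).eval (x : ℚ) := by
  lift u to ℕ using hu
  lift x to ℕ using hx
  rw [binomPoly_eval]
  simp only [Int.cast_natCast]
  rcases lt_or_ge x j with hxj | hjx
  · rw [binomQ, if_neg (by omega), descPochhammer_eval_coe_nat_of_lt hxj]
    simp
  rcases lt_or_ge (u + j) x with hux | hxu'
  · have hneg : (u : ℚ) + j + 1 - x = -((x - (u + j + 1) : ℕ) : ℚ) := by
      rw [Nat.cast_sub (by omega)]
      push_cast
      ring
    rw [binomQ, if_neg (by omega), hneg, ascPochhammer_eval_neg_coe_nat_of_lt (by omega)]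
    simp
  have hasc : (u : ℚ) + j + 1 - x = ((u + j - x + 1 : ℕ) : ℚ) := by
    rw [Nat.cast_add, Nat.cast_sub hxu']
    push_cast
    ring
  have hbinom : binomQ u (x - j) = (u.choose (x - j) : ℚ) := by
    rw [binomQ, if_pos (by omega), Int.toNat_natCast, show ((x : ℤ) - j).toNat = x - j by omega]
  have hfact : zfact (u - x + N - 1) = ((u + j - x + (N - 1 - j)).factorial : ℚ) := by
    rw [zfact]
    congr
    omega
  have key := Nat.choose_sub_mul_factorial_mul_factorial_add (N - 1 - j) hjx hxu'
  rw [hbinom, hfact, hasc, descPochhammer_eval_eq_descFactorial,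
    ascPochhammer_nat_eq_natCast_ascFactorial, zfact, zfact, Int.toNat_natCast, Int.toNat_natCast]
  field_simp
  exact_mod_cast key

lemma det_coeff_binomPoly (u : ℚ) (N : ℕ) :
    (Matrix.of fun i j : Fin N => (binomPoly u N j).coeff i).det =
      ∏ i : Fin N, pochQ (u + 1) i := by
  have h := Matrix.det_eval_eq_det_vandermonde_mul (fun i : Fin N => ((i : ℕ) : ℚ))
    (fun j => binomPoly u N j) fun j => natDegree_binomPoly_lt u j.isLt
  -- the coefficient determinant does not depend on the nodes: take `0, …, N - 1`, where the
  -- matrix `(P_j(i))` is lower triangular because `descPochhammer ℚ j` vanishes at `0, …, j - 1`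
  have hlower :
      (Matrix.of fun i j : Fin N => (binomPoly u N j).eval ((i : ℕ) : ℚ)).IsLowerTriangular :=
    fun i j hij => by
      rw [Matrix.of_apply, binomPoly_eval, descPochhammer_eval_coe_nat_of_lt (by exact hij),
        zero_mul]
  have hdiag (i : Fin N) : (binomPoly u N i).eval ((i : ℕ) : ℚ) =
      (i : ℕ).factorial * pochQ (u + 1) (N - 1 - i) := by
    rw [binomPoly_eval, descPochhammer_eval_eq_descFactorial, Nat.descFactorial_self,
      pochQ_eq_eval_ascPochhammer, add_right_comm, add_sub_cancel_right]
  rw [Matrix.det_of_isLowerTriangular _ hlower, Matrix.det_vandermonde_natCast] at h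
  simp only [Matrix.of_apply, hdiag, prod_mul_distrib] at h
  rw [← mul_left_cancel₀ (prod_ne_zero_iff.mpr fun i _ => by positivity) h,
    Fin.prod_univ_eq_prod_range (fun i => pochQ (u + 1) (N - 1 - i)), prod_range_reflect,
    Fin.prod_univ_eq_prod_range]

lemma det_binomQ_sub {N : ℕ} {u : ℤ} (hu : 0 ≤ u) (y : Fin N → ℤ) (hy0 : ∀ i, 0 ≤ y i)
    (hyu : ∀ i, y i ≤ u + N - 1) :
    (Matrix.of fun i j : Fin N => binomQ u (y i - j)).det =
      (Matrix.vandermonde fun i => (y i : ℚ)).det * ∏ i : Fin N,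
        (pochQ (u + 1) i * (zfact u / (zfact (y i) * zfact (u - y i + N - 1)))) := by
  have hentry : (Matrix.of fun i j : Fin N => binomQ u (y i - j)) = Matrix.of fun i j =>
      zfact u / (zfact (y i) * zfact (u - y i + N - 1)) *
        Matrix.of (fun i (j : Fin N) => (binomPoly u N j).eval (y i : ℚ)) i j := by
    ext i j
    exact binomQ_eq_mul_eval_binomPoly hu (hy0 i) (hyu i) j.isLt
  rw [hentry, Matrix.det_mul_column, Matrix.det_eval_eq_det_vandermonde_mul _ _
    fun j => natDegree_binomPoly_lt _ j.isLt, det_coeff_binomPoly, prod_mul_distrib]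
  ring

lemma det_binomQ_reflect {N : ℕ} {n : ℤ} (hn : 0 ≤ n) (S : ℤ) (y : Fin N → ℤ) :
    (Matrix.of fun i j : Fin N => binomQ n (S + i - y j)).det =
      (Matrix.of fun i j : Fin N => binomQ n (y i + (n - S) - j)).det := by
  rw [← Matrix.det_transpose]
  congr 1
  ext i j
  rw [Matrix.transpose_apply, Matrix.of_apply, Matrix.of_apply, binomQ_symm n _ hn]
  congr 1
  ring

-- stated in the exact shape produced by `det_binomQ_sub`, so that products match factorwise
lemma hahn_factor_eq {N : ℕ} {S T t : ℤ} (hT : 0 ≤ T) (x : ℤ) (k : ℕ) :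
    pochQ ((t : ℚ) + 1) k * (zfact t / (zfact x * zfact (t - x + N - 1))) *
      (pochQ (((T - t : ℤ) : ℚ) + 1) k * (zfact (T - t) /
        (zfact (x + (T - t - S)) * zfact (T - t - (x + (T - t - S)) + N - 1)))) =
    k.factorial * (pochQ ((T : ℚ) + 1) k * (zfact T /
        (zfact ((k : ℤ) + (T - S)) * zfact (T - ((k : ℤ) + (T - S)) + N - 1)))) *
      (1 / (zfact x * zfact (t - x + N - 1) * zfact (S - x + N - 1) * zfact (T - t - S + x))) *
      (pochQ ((t : ℚ) + 1) k * pochQ ((T : ℚ) - t + 1) k * zfact (S + N - 1 - k) *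
        zfact (T - S + k) / (pochQ ((T : ℚ) + 1) k * k.factorial)) *
      (zfact t * zfact (T - t) / zfact T) := by
  rw [show x + (T - t - S) = T - t - S + x by ring, show T - t - (T - t - S + x) + N - 1 =
    S - x + N - 1 by ring, show (k : ℤ) + (T - S) = T - S + k by ring,
    show T - (T - S + k) + N - 1 = S + N - 1 - k by ring, Int.cast_sub]
  have := pochQ_ne_zero (show (0 : ℚ) < T + 1 by positivity) k
  field_simp [zfact_ne_zero]

-- Indices `i, j` are `0`-based, shifted by one with respect to the informal statement.
theorem stmt_1_general (N : ℕ) (S T t : ℤ)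
    (hS0 : 0 ≤ S) (hST : S ≤ T) (ht0 : 0 ≤ t) (htT : t ≤ T)
    (z : Fin N → ℤ)
    (hlow : ∀ i, max 0 (S + t - T) ≤ z i)
    (hhigh : ∀ i, z i ≤ min t S + N - 1) :
    Matrix.det (Matrix.of fun i j : Fin N => binomQ t (z i - (j : ℤ))) *
      Matrix.det (Matrix.of fun i j : Fin N => binomQ (T - t) (S + (i : ℤ) - z j))
    = Matrix.det (Matrix.of fun i j : Fin N => binomQ T (S + (i : ℤ) - (j : ℤ))) *
      (∏ i : Fin N, ∏ j ∈ Finset.Ioi i, ((z i - z j : ℤ) : ℚ) ^ 2) *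
      (∏ i : Fin N, (1 / (zfact (z i) * zfact (t - z i + N - 1) *
        zfact (S - z i + N - 1) * zfact (T - t - S + z i)))) *
      (∏ i : Fin N, (pochQ ((t : ℚ) + 1) i * pochQ ((T : ℚ) - t + 1) i *
          zfact (S + N - 1 - (i : ℤ)) * zfact (T - S + (i : ℤ))) /
        (pochQ ((T : ℚ) + 1) i * (Nat.factorial i : ℚ))) *
      (zfact t * zfact (T - t) / zfact T) ^ (N : ℕ) := by
  have hT : 0 ≤ T := hS0.trans hST
  have hTt : 0 ≤ T - t := sub_nonneg.mpr htT
  have hsq : ∏ i : Fin N, ∏ j ∈ Ioi i, ((z i - z j : ℤ) : ℚ) ^ 2 =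
      (Matrix.vandermonde fun i => (z i : ℚ)).det ^ 2 := by
    push_cast
    exact (Matrix.det_vandermonde_sq _).symm
  have hfactors := Fintype.prod_congr _ _ fun i : Fin N =>
    hahn_factor_eq (N := N) (S := S) (t := t) hT (z i) i
  rw [det_binomQ_sub ht0 z (fun i => (le_max_left _ _).trans (hlow i))
      (fun i => (hhigh i).trans (by omega)),
    det_binomQ_reflect hTt, det_binomQ_sub hTt (fun i => z i + (T - t - S))
      (fun i => by have := hlow i; omega) (fun i => by have := hhigh i; omega),
    det_binomQ_reflect hT S (fun j => (j : ℤ)), det_binomQ_sub hT (fun i => (i : ℤ) + (T - S))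
      (fun i => by omega) (fun i => by omega),
    Matrix.det_vandermonde_intCast_add, Matrix.det_vandermonde_intCast_add (fun i => (i : ℤ)),
    hsq]
  simp only [Int.cast_natCast, Matrix.det_vandermonde_natCast, prod_mul_distrib,
    Fin.prod_const] at hfactors ⊢
  linear_combination (Matrix.vandermonde fun i => (z i : ℚ)).det ^ 2 * hfactors

/-- The identity expressing the one-dimensional distribution of the non-intersecting
path model at time `t` (a ratio of three binomial determinants) in product form; it
exhibits the distribution as the Hahn orthogonal polynomial ensemble. Indices `i, j`
here are `0`-based, i.e. shifted by one with respect to the `1`-based statement. -/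
theorem stmt_1 (N : ℕ) (hN : 1 ≤ N) (S T t : ℤ)
    (hS0 : 0 ≤ S) (hST : S ≤ T) (ht0 : 0 ≤ t) (htT : t ≤ T)
    (z : Fin N → ℤ) (hz : StrictMono z)
    (hlow : ∀ i, max 0 (S + t - T) ≤ z i)
    (hhigh : ∀ i, z i ≤ min t S + N - 1) :
    Matrix.det (Matrix.of fun i j : Fin N => binomQ t (z i - (j : ℤ))) *
      Matrix.det (Matrix.of fun i j : Fin N => binomQ (T - t) (S + (i : ℤ) - z j))
    = Matrix.det (Matrix.of fun i j : Fin N => binomQ T (S + (i : ℤ) - (j : ℤ))) *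
      (∏ i : Fin N, ∏ j ∈ Finset.Ioi i, ((z i - z j : ℤ) : ℚ) ^ 2) *
      (∏ i : Fin N, (1 / (zfact (z i) * zfact (t - z i + N - 1) *
        zfact (S - z i + N - 1) * zfact (T - t - S + z i)))) *
      (∏ i : Fin N, (pochQ ((t : ℚ) + 1) i * pochQ ((T : ℚ) - t + 1) i *
          zfact (S + N - 1 - (i : ℤ)) * zfact (T - S + (i : ℤ))) /
        (pochQ ((T : ℚ) + 1) i * (Nat.factorial i : ℚ))) *
      (zfact t * zfact (T - t) / zfact T) ^ (N : ℕ) :=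
  stmt_1_general N S T t hS0 hST ht0 htT z hlow hhigh
end

section
/- Let L, N ∈ ℕ with 1 ≤ N ≤ L+1, let w : {0,…,L} → ℝ be strictly positive, and let p₀, p₁, …, p_L be polynomials with deg p_n = n that are orthogonal with respect to w, i.e. Σ_{x=0}^{L} w(x)p_m(x)p_n(x) = 0 for m ≠ n. Define a probability measure on N-element subsets {z₁ < ⋯ < z_N} of {0,…,L} by P(z₁,…,z_N) = (1/Z)·∏_{1≤i<j≤N}(z_i−z_j)²·∏_{i=1}^N w(z_i), where Z is the normalizing constant. Then for any distinct points x₁ < ⋯ < x_k in {0,…,L}, the probability that the random N-point subset contains all of x₁,…,x_k equals det_{i,j=1,…,k}[K(x_i,x_j)], where K(x,y) = √(w(x)w(y))·Σ_{n=0}^{N−1} p_n(x)p_n(y)/⟨p_n,p_n⟩ and ⟨p_n,p_n⟩ = Σ_{x=0}^{L} w(x)p_n(x)². -/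
open Finset

/-- The (unnormalized) weight of a finite point configuration `A` in the orthogonal
polynomial ensemble with weight `w`:  `∏_{i<j}(z_i−z_j)² · ∏ w(z_i)`. -/
noncomputable def opeWeight (w : ℕ → ℝ) (A : Finset ℕ) : ℝ :=
  (∏ u ∈ A, ∏ v ∈ A.filter (· < u), ((u : ℝ) - (v : ℝ)) ^ 2) * ∏ u ∈ A, w u

/-- The Christoffel–Darboux kernel
`K(x,y) = √(w(x)w(y)) Σ_{n<N} p_n(x)p_n(y)/⟨p_n,p_n⟩`. -/
noncomputable def cdKernel (L N : ℕ) (w : ℕ → ℝ) (p : ℕ → Polynomial ℝ) (x y : ℕ) : ℝ :=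
  Real.sqrt (w x * w y) *
    ∑ n ∈ Finset.range N,
      (p n).eval (x : ℝ) * (p n).eval (y : ℝ) /
        (∑ u ∈ Finset.range (L + 1), w u * ((p n).eval (u : ℝ)) ^ 2)

/-!
Write `φₙ(x) = √w(x) pₙ(x) / ‖pₙ‖`. These functions are orthonormal on `S = {0,…,L}` and
`K(x,y) = Σ_{n<N} φₙ(x) φₙ(y)`, so `K` is the kernel of an orthogonal projection of rank `N`:
`K² = K` on `S` and `Σ_{x∈S} K(x,x) = N`.

For a projection kernel, `Σ_{y ∈ S \ X} det K_{X ∪ {y}} = (N - |X|) det K_X`: expanding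
`det K_{(y,z)}` along its first row and column, `K² = K` turns the cross terms into
`trace (adj K_z · K_z) = |X| det K_z`. Counting each `N`-set `A ⊇ X` once for every
`y ∈ A \ X`, a downward induction on `|X|` gives `Σ_{A ⊇ X, |A| = N} det K_A = det K_X`.

For `|A| = N`, the Gram factorisation `K_A = Φ_A Φ_Aᵀ` with `Φ_A = (φₙ(a))` and the
Vandermonde evaluation of `det Φ_A` show that the ensemble weight of `A` is `c · det K_A` with
`c = ∏_{n<N} ‖pₙ‖² / lc(pₙ)² > 0`. Taking `X = ∅` identifies the normalising sum with `c`;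
for `k > N` both sides vanish because `K` has rank `N`.
-/

namespace Matrix

variable {R : Type*} [CommRing R]

theorem det_succ_bordered {k : ℕ} (M : Matrix (Fin (k + 1)) (Fin (k + 1)) R) :
    M.det = M 0 0 * (M.submatrix Fin.succ Fin.succ).det -
      ∑ j : Fin k, ∑ i : Fin k,
        M 0 j.succ * (M.submatrix Fin.succ Fin.succ).adjugate j i * M i.succ 0 := by
  rcases k with _ | k
  · simp [det_unique]
  rw [det_succ_row_zero, Fin.sum_univ_succ, sub_eq_add_neg, ← sum_neg_distrib]
  congr 1
  · simp
  refine sum_congr rfl fun j _ => ?_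
  rw [det_succ_column_zero, mul_sum, ← sum_neg_distrib]
  refine sum_congr rfl fun i _ => ?_
  rw [adjugate_fin_succ_eq_det_submatrix]
  simp only [submatrix_apply, submatrix_submatrix, Fin.succ_succAbove_zero, Fin.val_succ,
    Function.comp_def, Fin.succ_succAbove_succ, pow_succ, pow_add]
  ring

theorem det_mul_eq_zero_of_card_lt {K m n : Type*} [Field K] [Fintype m] [Fintype n]
    [DecidableEq m] (A : Matrix m n K) (B : Matrix n m K)
    (h : Fintype.card n < Fintype.card m) : (A * B).det = 0 := by
  by_contra hdet
  have hrank := rank_of_isUnit (A * B) ((isUnit_iff_isUnit_det _).mpr (Ne.isUnit hdet))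
  have := (rank_mul_le_left A B).trans (rank_le_card_width A)
  omega

theorem det_vandermonde_orderEmbOfFin_sq {α : Type*} [LinearOrder α] (f : α → R)
    (A : Finset α) {n : ℕ} (h : #A = n) :
    (vandermonde fun i => f (A.orderEmbOfFin h i)).det ^ 2 =
      ∏ u ∈ A, ∏ v ∈ A with v < u, (f u - f v) ^ 2 := by
  conv_rhs => rw [← map_orderEmbOfFin_univ A h]
  simp_rw [prod_map, filter_map, prod_map, Function.comp_def, RelEmbedding.coe_toEmbedding,
    OrderEmbedding.lt_iff_lt, det_vandermonde, ← prod_pow]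
  exact prod_comm' fun i j => by simp

open Polynomial in
theorem det_eval_eq_prod_leadingCoeff_mul_det_vandermonde {n : ℕ} (v : Fin n → R)
    (p : Fin n → R[X]) (h_deg : ∀ i, (p i).natDegree = i) :
    (of fun i j => (p j).eval (v i)).det = (∏ i, (p i).leadingCoeff) * (vandermonde v).det := by
  rw [eval_matrixOfPolynomials_eq_vandermonde_mul_matrixOfPolynomials v p fun i => (h_deg i).le,
    det_mul, mul_comm,
    det_of_isUpperTriangular (matrixOfPolynomials_blockTriangular p fun i => (h_deg i).le)]
  simp_rw [of_apply, leadingCoeff, h_deg]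

end Matrix

section ProjectionKernel

variable {α R : Type*}

def IsProjectionKernel [CommSemiring R] (S : Finset α) (K : α → α → R) : Prop :=
  ∀ x ∈ S, ∀ z ∈ S, ∑ y ∈ S, K x y * K y z = K x z

abbrev kernelMatrix {ι : Type*} (K : α → α → R) (v : ι → α) : Matrix ι ι R :=
  Matrix.of fun i j => K (v i) (v j)

@[simp]
theorem kernelMatrix_apply {ι : Type*} (K : α → α → R) (v : ι → α) (i j : ι) :
    kernelMatrix K v i j = K (v i) (v j) :=
  rfl

def principalMinor [DecidableEq α] [CommRing R] (K : α → α → R) (X : Finset α) : R :=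
  (kernelMatrix K ((↑) : X → α)).det

@[simp]
theorem principalMinor_empty [DecidableEq α] [CommRing R] (K : α → α → R) :
    principalMinor K ∅ = 1 :=
  Matrix.det_isEmpty

theorem det_kernelMatrix_eq_principalMinor [DecidableEq α] [CommRing R] {ι : Type*} [Fintype ι]
    [DecidableEq ι] (K : α → α → R) {v : ι → α} (hv : v.Injective) :
    (kernelMatrix K v).det = principalMinor K (univ.image v) := by
  let e : ι ≃ univ.image v :=
    Equiv.ofBijective (fun i => ⟨v i, mem_image_of_mem v (mem_univ i)⟩)
      ⟨fun i j h => hv (congrArg Subtype.val h), fun ⟨x, hx⟩ => by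
        obtain ⟨i, -, rfl⟩ := mem_image.mp hx
        exact ⟨i, rfl⟩⟩
  exact Matrix.det_submatrix_equiv_self e (kernelMatrix K ((↑) : univ.image v → α))

theorem sum_det_kernelMatrix_cons [CommRing R] {S : Finset α} {K : α → α → R}
    (hK : IsProjectionKernel S K) {k : ℕ} (z : Fin k → α) (hz : ∀ i, z i ∈ S) :
    ∑ y ∈ S, (kernelMatrix K (Fin.cons y z : Fin (k + 1) → α)).det =
      (∑ y ∈ S, K y y - k) * (kernelMatrix K z).det := by
  set Kz := kernelMatrix K z
  have hcross : ∑ y ∈ S, ∑ j, ∑ i, K y (z j) * Kz.adjugate j i * K (z i) y = k * Kz.det :=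
    calc ∑ y ∈ S, ∑ j, ∑ i, K y (z j) * Kz.adjugate j i * K (z i) y
        = ∑ j, ∑ i, Kz.adjugate j i * ∑ y ∈ S, K (z i) y * K y (z j) := by
          rw [sum_comm]
          refine sum_congr rfl fun j _ => ?_
          rw [sum_comm]
          refine sum_congr rfl fun i _ => ?_
          rw [mul_sum]
          exact sum_congr rfl fun y _ => by ring
      _ = (Kz.adjugate * Kz).trace := by
          simp only [hK _ (hz _) _ (hz _), Matrix.trace, Matrix.diag, Matrix.mul_apply, Kz,
            Matrix.of_apply]
      _ = k * Kz.det := by simp [Matrix.adjugate_mul, mul_comm]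
  have hcorner : ∀ y, (kernelMatrix K (Fin.cons y z : Fin (k + 1) → α)).submatrix
      Fin.succ Fin.succ = Kz := fun y => by ext; simp [Kz]
  simp only [Matrix.det_succ_bordered, hcorner, Matrix.of_apply, Fin.cons_zero, Fin.cons_succ]
  rw [sum_sub_distrib, ← sum_mul, hcross, sub_mul]

theorem sum_principalMinor_insert [DecidableEq α] [CommRing R] {S : Finset α}
    {K : α → α → R} (hK : IsProjectionKernel S K) {X : Finset α} (hX : X ⊆ S) :
    ∑ y ∈ S \ X, principalMinor K (insert y X) =
      (∑ y ∈ S, K y y - #X) * principalMinor K X := by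
  set z : Fin #X → α := fun i => X.equivFin.symm i
  have hz : z.Injective := fun i j h => X.equivFin.symm.injective (Subtype.ext h)
  have hmem : ∀ x, x ∈ X ↔ ∃ i, z i = x := fun x =>
    ⟨fun hx => ⟨X.equivFin ⟨x, hx⟩, by simp [z]⟩,
      fun ⟨i, hi⟩ => hi ▸ (X.equivFin.symm i).2⟩
  have himage : univ.image z = X := by ext x; simp [hmem]
  have hcons : ∀ y ∈ S, (kernelMatrix K (Fin.cons y z : Fin (#X + 1) → α)).det =
      if y ∈ X then 0 else principalMinor K (insert y X) := by
    intro y _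
    split_ifs with hy
    · obtain ⟨i, rfl⟩ := (hmem y).mp hy
      exact Matrix.det_zero_of_row_eq (Fin.succ_ne_zero i).symm (by ext; simp)
    · have hinj : (Fin.cons y z : Fin (#X + 1) → α).Injective :=
        Fin.cons_injective_iff.mpr ⟨fun ⟨i, hi⟩ => hy ((hmem y).mpr ⟨i, hi⟩), hz⟩
      rw [det_kernelMatrix_eq_principalMinor K hinj]
      congr
      ext x
      simp [Fin.exists_fin_succ, hmem, eq_comm]
  calc ∑ y ∈ S \ X, principalMinor K (insert y X)
      = ∑ y ∈ S, (kernelMatrix K (Fin.cons y z : Fin (#X + 1) → α)).det := by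
        rw [sum_congr rfl hcons, sum_ite, sum_const_zero, zero_add, filter_not,
          filter_mem_eq_inter, inter_eq_right.mpr hX]
    _ = (∑ y ∈ S, K y y - #X) * principalMinor K X := by
        rw [sum_det_kernelMatrix_cons hK z fun i => hX ((hmem _).mpr ⟨i, rfl⟩),
          det_kernelMatrix_eq_principalMinor K hz, himage]

theorem sum_sdiff_sum_filter_insert_subset {M : Type*} [DecidableEq α] [AddCommMonoid M]
    (S X : Finset α) (n : ℕ) (f : Finset α → M) :
    ∑ y ∈ S \ X, ∑ A ∈ S.powersetCard n with insert y X ⊆ A, f A =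
      (n - #X) • ∑ A ∈ S.powersetCard n with X ⊆ A, f A := by
  rw [sum_comm' (t' := {A ∈ S.powersetCard n | X ⊆ A}) (s' := fun A => A \ X), smul_sum]
  · refine sum_congr rfl fun A hA => ?_
    simp only [mem_filter, mem_powersetCard] at hA
    rw [sum_const, card_sdiff_of_subset hA.2, hA.1.2]
  · intro y A
    simp only [mem_filter, mem_powersetCard, mem_sdiff, insert_subset_iff]
    constructor
    · rintro ⟨⟨-, hyX⟩, ⟨hAS, hAn⟩, hyA, hXA⟩
      exact ⟨⟨hyA, hyX⟩, ⟨hAS, hAn⟩, hXA⟩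
    · rintro ⟨⟨hyA, hyX⟩, ⟨hAS, hAn⟩, hXA⟩
      exact ⟨⟨hAS hyA, hyX⟩, ⟨hAS, hAn⟩, hyA, hXA⟩

theorem sum_principalMinor_superset [DecidableEq α] [Field R] [CharZero R] {S : Finset α}
    {K : α → α → R} (hK : IsProjectionKernel S K) {n : ℕ} (htr : ∑ x ∈ S, K x x = n)
    {X : Finset α} (hX : X ⊆ S) (hXn : #X ≤ n) :
    ∑ A ∈ S.powersetCard n with X ⊆ A, principalMinor K A = principalMinor K X := by
  obtain ⟨d, hd⟩ := Nat.exists_eq_add_of_le hXn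
  induction d generalizing X with
  | zero =>
    have hsingle : {A ∈ S.powersetCard n | X ⊆ A} = {X} := by
      ext A
      simp only [mem_filter, mem_powersetCard, mem_singleton]
      constructor
      · rintro ⟨⟨-, hA⟩, hXA⟩
        exact (eq_of_subset_of_card_le hXA (by omega)).symm
      · rintro rfl
        exact ⟨⟨hX, by omega⟩, subset_rfl⟩
    rw [hsingle, sum_singleton]
  | succ d ih =>
    have hd' : ((n - #X : ℕ) : R) = d + 1 := by
      rw [hd, Nat.add_sub_cancel_left]
      push_cast
      rfl
    have hstep :
        ∑ y ∈ S \ X, ∑ A ∈ S.powersetCard n with insert y X ⊆ A, principalMinor K A =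
          ∑ y ∈ S \ X, principalMinor K (insert y X) := by
      refine sum_congr rfl fun y hy => ?_
      rw [mem_sdiff] at hy
      exact ih (insert_subset hy.1 hX) (by rw [card_insert_of_notMem hy.2]; omega)
        (by rw [card_insert_of_notMem hy.2]; omega)
    rw [sum_sdiff_sum_filter_insert_subset, sum_principalMinor_insert hK hX, htr, nsmul_eq_mul,
      ← Nat.cast_sub hXn, hd'] at hstep
    exact mul_left_cancel₀ (Nat.cast_add_one_ne_zero d) hstep

section Orthonormal

variable {ι : Type*} {S : Finset α} {T : Finset ι} {φ : ι → α → R} {K : α → α → R}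

theorem isProjectionKernel_of_orthonormal [CommSemiring R] [DecidableEq ι]
    (hφ : ∀ m ∈ T, ∀ n ∈ T, ∑ x ∈ S, φ m x * φ n x = if m = n then 1 else 0)
    (hK : ∀ x ∈ S, ∀ y ∈ S, K x y = ∑ n ∈ T, φ n x * φ n y) :
    IsProjectionKernel S K := by
  intro x hx z hz
  calc ∑ y ∈ S, K x y * K y z
      = ∑ n ∈ T, ∑ m ∈ T, φ n x * φ m z * ∑ y ∈ S, φ n y * φ m y := by
        rw [sum_congr rfl fun y hy => by rw [hK x hx y hy, hK y hy z hz, sum_mul_sum], sum_comm]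
        refine sum_congr rfl fun n _ => ?_
        rw [sum_comm]
        exact sum_congr rfl fun m _ => by rw [mul_sum]; exact sum_congr rfl fun y _ => by ring
    _ = ∑ n ∈ T, φ n x * φ n z := by
        refine sum_congr rfl fun n hn => ?_
        rw [sum_congr rfl fun m hm => congrArg _ (hφ n hn m hm)]
        simp [hn]
    _ = K x z := (hK x hx z hz).symm

theorem sum_diag_eq_card_of_orthonormal [CommSemiring R]
    (hφ : ∀ n ∈ T, ∑ x ∈ S, φ n x * φ n x = 1)
    (hK : ∀ x ∈ S, K x x = ∑ n ∈ T, φ n x * φ n x) : ∑ x ∈ S, K x x = #T := by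
  rw [sum_congr rfl hK, sum_comm, sum_congr rfl hφ, sum_const, nsmul_one]

theorem principalMinor_eq_zero_of_card_lt [DecidableEq α] [Field R] {ψ : ι → α → R}
    (hK : ∀ x ∈ S, ∀ y ∈ S, K x y = ∑ n ∈ T, φ n x * ψ n y) {X : Finset α}
    (hX : X ⊆ S) (h : #T < #X) : principalMinor K X = 0 := by
  have hfactor : kernelMatrix K ((↑) : X → α) =
      (Matrix.of fun (i : X) (n : T) => φ n i) * Matrix.of fun (n : T) (j : X) => ψ n j := by
    ext i j
    simp only [Matrix.of_apply, Matrix.mul_apply, hK _ (hX i.2) _ (hX j.2)]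
    exact (sum_coe_sort T _).symm
  rw [principalMinor, hfactor]
  exact Matrix.det_mul_eq_zero_of_card_lt _ _ (by simpa using h)

end Orthonormal

end ProjectionKernel

section OrthogonalPolynomialEnsemble

open Polynomial

noncomputable def weightedSqNorm (L : ℕ) (w : ℕ → ℝ) (q : ℝ[X]) : ℝ :=
  ∑ u ∈ range (L + 1), w u * q.eval (u : ℝ) ^ 2

noncomputable def orthonormalFn (L : ℕ) (w : ℕ → ℝ) (q : ℝ[X]) (x : ℕ) : ℝ :=
  √(w x) * q.eval (x : ℝ) / √(weightedSqNorm L w q)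

variable {L N : ℕ} {w : ℕ → ℝ} {p : ℕ → ℝ[X]}

theorem weightedSqNorm_nonneg (hw : ∀ x ≤ L, 0 < w x) (q : ℝ[X]) :
    0 ≤ weightedSqNorm L w q :=
  sum_nonneg fun u hu => mul_nonneg (hw u (Nat.lt_succ_iff.mp (mem_range.mp hu))).le (sq_nonneg _)

theorem weightedSqNorm_pos (hw : ∀ x ≤ L, 0 < w x) {q : ℝ[X]} {n : ℕ} (hq : q.degree = n)
    (hn : n ≤ L) : 0 < weightedSqNorm L w q := by
  obtain ⟨u, hu, hqu⟩ : ∃ u < L + 1, q.eval (u : ℝ) ≠ 0 := by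
    by_contra! h
    refine ne_zero_of_coe_le_degree hq.ge (eq_zero_of_natDegree_lt_card_of_eval_eq_zero q
      (f := fun u : Fin (L + 1) => (u : ℝ)) (fun u v huv => Fin.ext (Nat.cast_injective huv))
      (fun u => h u u.2) ?_)
    simpa [natDegree_eq_of_degree_eq_some hq] using Nat.lt_succ_of_le hn
  refine sum_pos' (fun u hu => mul_nonneg (hw u (Nat.lt_succ_iff.mp (mem_range.mp hu))).le
    (sq_nonneg _)) ⟨u, mem_range.mpr hu, ?_⟩
  have := hw u (Nat.lt_succ_iff.mp hu)
  positivity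

theorem sum_orthonormalFn_mul (hw : ∀ x ≤ L, 0 < w x) (hdeg : ∀ n ≤ L, (p n).degree = n)
    (horth : ∀ m ≤ L, ∀ n ≤ L, m ≠ n →
      ∑ x ∈ range (L + 1), w x * (p m).eval (x : ℝ) * (p n).eval (x : ℝ) = 0)
    {m n : ℕ} (hm : m ≤ L) (hn : n ≤ L) :
    ∑ x ∈ range (L + 1), orthonormalFn L w (p m) x * orthonormalFn L w (p n) x =
      if m = n then 1 else 0 := by
  have hterm : ∀ x ∈ range (L + 1), orthonormalFn L w (p m) x * orthonormalFn L w (p n) x =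
      w x * (p m).eval (x : ℝ) * (p n).eval (x : ℝ) /
        (√(weightedSqNorm L w (p m)) * √(weightedSqNorm L w (p n))) := by
    intro x hx
    rw [orthonormalFn, orthonormalFn, div_mul_div_comm]
    congr 1
    linear_combination (p m).eval (x : ℝ) * (p n).eval (x : ℝ) *
      Real.mul_self_sqrt (hw x (Nat.lt_succ_iff.mp (mem_range.mp hx))).le
  rw [sum_congr rfl hterm, ← sum_div]
  split_ifs with hmn
  · subst hmn
    have hpos := weightedSqNorm_pos hw (hdeg m hm) hm
    rw [Real.mul_self_sqrt hpos.le, ← div_self hpos.ne', weightedSqNorm]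
    congr 1
    exact sum_congr rfl fun x _ => by ring
  · rw [horth m hm n hn hmn, zero_div]

theorem cdKernel_eq_sum_orthonormalFn (hw : ∀ x ≤ L, 0 < w x) {x : ℕ} (hx : x ≤ L)
    (y : ℕ) :
    cdKernel L N w p x y =
      ∑ n ∈ range N, orthonormalFn L w (p n) x * orthonormalFn L w (p n) y := by
  rw [cdKernel, Real.sqrt_mul (hw x hx).le, mul_sum]
  refine sum_congr rfl fun n _ => ?_
  rw [orthonormalFn, orthonormalFn, div_mul_div_comm,
    Real.mul_self_sqrt (weightedSqNorm_nonneg hw (p n)), weightedSqNorm]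
  ring

theorem det_orthonormalFn (hdeg : ∀ n < N, (p n).natDegree = n) (v : Fin N → ℕ) :
    (Matrix.of fun i n : Fin N => orthonormalFn L w (p n) (v i)).det =
      (∏ i, √(w (v i))) * (∏ n : Fin N, (p n).leadingCoeff / √(weightedSqNorm L w (p n))) *
        (Matrix.vandermonde fun i => (v i : ℝ)).det := by
  set E : Matrix (Fin N) (Fin N) ℝ := Matrix.of fun i n => (p n).eval (v i : ℝ)
  set D : Matrix (Fin N) (Fin N) ℝ :=
    Matrix.of fun i n => (√(weightedSqNorm L w (p n)))⁻¹ * E i n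
  have hfactor : (Matrix.of fun i n : Fin N => orthonormalFn L w (p n) (v i)) =
      Matrix.of fun i n => √(w (v i)) * D i n := by
    ext i n
    simp only [Matrix.of_apply, orthonormalFn, D, E]
    ring
  rw [hfactor, Matrix.det_mul_column, Matrix.det_mul_row,
    Matrix.det_eval_eq_prod_leadingCoeff_mul_det_vandermonde _ (fun n : Fin N => p n)
      fun n => hdeg n n.2]
  simp only [div_eq_mul_inv, prod_mul_distrib]
  ring

theorem opeWeight_eq_mul_principalMinor (hw : ∀ x ≤ L, 0 < w x)
    (hdeg : ∀ n ≤ L, (p n).degree = n) {A : Finset ℕ} (hA : A ⊆ range (L + 1))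
    (hAN : #A = N) :
    opeWeight w A = (∏ n ∈ range N, weightedSqNorm L w (p n) / (p n).leadingCoeff ^ 2) *
      principalMinor (cdKernel L N w p) A := by
  set a := A.orderEmbOfFin hAN
  have haL : ∀ i, a i ≤ L := fun i =>
    Nat.lt_succ_iff.mp (mem_range.mp (hA (A.orderEmbOfFin_mem hAN i)))
  have hnL : ∀ n < N, n ≤ L := fun n hn => by
    have := card_le_card hA
    rw [card_range] at this
    omega
  set Φ := Matrix.of fun i n : Fin N => orthonormalFn L w (p n) (a i)
  have hminor : principalMinor (cdKernel L N w p) A = Φ.det ^ 2 := by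
    rw [← image_orderEmbOfFin_univ A hAN, ← det_kernelMatrix_eq_principalMinor _ a.injective]
    have hgram : kernelMatrix (cdKernel L N w p) a = Φ * Φ.transpose := by
      ext i j
      rw [kernelMatrix_apply, cdKernel_eq_sum_orthonormalFn hw (haL i), Matrix.mul_apply,
        ← Fin.sum_univ_eq_sum_range]
      rfl
    rw [hgram, Matrix.det_mul, Matrix.det_transpose, sq]
  have hconst : (∏ n ∈ range N, weightedSqNorm L w (p n) / (p n).leadingCoeff ^ 2) *
      (∏ n : Fin N, (p n).leadingCoeff / √(weightedSqNorm L w (p n))) ^ 2 = 1 := by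
    rw [← prod_pow, Fin.prod_univ_eq_prod_range
      (fun n => ((p n).leadingCoeff / √(weightedSqNorm L w (p n))) ^ 2), ← prod_mul_distrib]
    refine prod_eq_one fun n hn => ?_
    have hn := hnL n (mem_range.mp hn)
    have hpos := weightedSqNorm_pos hw (hdeg n hn) hn
    have hlc := leadingCoeff_ne_zero.mpr (ne_zero_of_coe_le_degree (hdeg n hn).ge)
    rw [div_pow, Real.sq_sqrt hpos.le]
    field_simp
  have hw' : (∏ i, √(w (a i))) ^ 2 = ∏ u ∈ A, w u := by
    rw [← prod_pow, ← image_orderEmbOfFin_univ A hAN, prod_image fun i _ j _ h => a.injective h]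
    exact prod_congr rfl fun i _ => Real.sq_sqrt (hw _ (haL i)).le
  calc opeWeight w A
      = (∏ n ∈ range N, weightedSqNorm L w (p n) / (p n).leadingCoeff ^ 2) *
          (∏ n : Fin N, (p n).leadingCoeff / √(weightedSqNorm L w (p n))) ^ 2 *
            opeWeight w A := by
        rw [hconst, one_mul]
    _ = _ := by
        rw [hminor,
          det_orthonormalFn fun n hn => natDegree_eq_of_degree_eq_some (hdeg n (hnL n hn)),
          mul_pow, mul_pow, hw', Matrix.det_vandermonde_orderEmbOfFin_sq, opeWeight]
        ring

theorem prod_weightedSqNorm_div_leadingCoeff_sq_pos (hNL : N ≤ L + 1) (hw : ∀ x ≤ L, 0 < w x)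
    (hdeg : ∀ n ≤ L, (p n).degree = n) :
    0 < ∏ n ∈ range N, weightedSqNorm L w (p n) / (p n).leadingCoeff ^ 2 := by
  refine prod_pos fun n hn => ?_
  have hn : n ≤ L := by have := mem_range.mp hn; omega
  exact div_pos (weightedSqNorm_pos hw (hdeg n hn) hn)
    (pow_two_pos_of_ne_zero (leadingCoeff_ne_zero.mpr (ne_zero_of_coe_le_degree (hdeg n hn).ge)))

theorem isProjectionKernel_cdKernel_and_sum_diag (hNL : N ≤ L + 1) (hw : ∀ x ≤ L, 0 < w x)
    (hdeg : ∀ n ≤ L, (p n).degree = n)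
    (horth : ∀ m ≤ L, ∀ n ≤ L, m ≠ n →
      ∑ x ∈ range (L + 1), w x * (p m).eval (x : ℝ) * (p n).eval (x : ℝ) = 0) :
    IsProjectionKernel (range (L + 1)) (cdKernel L N w p) ∧
      ∑ x ∈ range (L + 1), cdKernel L N w p x x = N := by
  have hnL : ∀ n ∈ range N, n ≤ L := fun n hn => by have := mem_range.mp hn; omega
  have hφ : ∀ m ∈ range N, ∀ n ∈ range N, ∑ x ∈ range (L + 1),
      orthonormalFn L w (p m) x * orthonormalFn L w (p n) x = if m = n then 1 else 0 :=
    fun m hm n hn => sum_orthonormalFn_mul hw hdeg horth (hnL m hm) (hnL n hn)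
  have hK : ∀ x ∈ range (L + 1), ∀ y ∈ range (L + 1), cdKernel L N w p x y =
      ∑ n ∈ range N, orthonormalFn L w (p n) x * orthonormalFn L w (p n) y :=
    fun x hx y _ => cdKernel_eq_sum_orthonormalFn hw (Nat.lt_succ_iff.mp (mem_range.mp hx)) y
  refine ⟨isProjectionKernel_of_orthonormal hφ hK, ?_⟩
  simpa using sum_diag_eq_card_of_orthonormal (fun n hn => by simpa using hφ n hn n hn)
    fun x hx => hK x hx x hx

theorem principalMinor_cdKernel_eq_zero (hw : ∀ x ≤ L, 0 < w x) {X : Finset ℕ}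
    (hX : X ⊆ range (L + 1)) (hNX : N < #X) : principalMinor (cdKernel L N w p) X = 0 :=
  principalMinor_eq_zero_of_card_lt (T := range N) (φ := fun n => orthonormalFn L w (p n))
    (ψ := fun n => orthonormalFn L w (p n))
    (fun x hx y _ => cdKernel_eq_sum_orthonormalFn hw (Nat.lt_succ_iff.mp (mem_range.mp hx)) y)
    hX (by rwa [card_range])

theorem sum_opeWeight_superset (hNL : N ≤ L + 1) (hw : ∀ x ≤ L, 0 < w x)
    (hdeg : ∀ n ≤ L, (p n).degree = n)
    (horth : ∀ m ≤ L, ∀ n ≤ L, m ≠ n →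
      ∑ x ∈ range (L + 1), w x * (p m).eval (x : ℝ) * (p n).eval (x : ℝ) = 0)
    {X : Finset ℕ} (hX : X ⊆ range (L + 1)) (hXN : #X ≤ N) :
    ∑ A ∈ (range (L + 1)).powersetCard N with X ⊆ A, opeWeight w A =
      (∏ n ∈ range N, weightedSqNorm L w (p n) / (p n).leadingCoeff ^ 2) *
        principalMinor (cdKernel L N w p) X := by
  obtain ⟨hK, htr⟩ := isProjectionKernel_cdKernel_and_sum_diag hNL hw hdeg horth
  rw [← sum_principalMinor_superset hK htr hX hXN, mul_sum]
  refine sum_congr rfl fun A hA => ?_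
  obtain ⟨hAS, hAN⟩ := mem_powersetCard.mp (mem_filter.mp hA).1
  exact opeWeight_eq_mul_principalMinor hw hdeg hAS hAN

end OrthogonalPolynomialEnsemble

theorem stmt_2_general (L N : ℕ) (hNL : N ≤ L + 1)
    (w : ℕ → ℝ) (hw : ∀ x ≤ L, 0 < w x)
    (p : ℕ → Polynomial ℝ) (hdeg : ∀ n ≤ L, (p n).degree = (n : ℕ))
    (horth : ∀ m ≤ L, ∀ n ≤ L, m ≠ n →
      ∑ x ∈ Finset.range (L + 1), w x * (p m).eval (x : ℝ) * (p n).eval (x : ℝ) = 0)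
    (k : ℕ) (xs : Fin k → ℕ) (hxs : StrictMono xs) (hxsL : ∀ i, xs i ≤ L) :
    (∑ A ∈ ((Finset.range (L + 1)).powersetCard N).filter (fun A => ∀ i, xs i ∈ A),
        opeWeight w A)
      / (∑ A ∈ (Finset.range (L + 1)).powersetCard N, opeWeight w A)
    = Matrix.det (Matrix.of fun i j : Fin k => cdKernel L N w p (xs i) (xs j)) := by
  set X := univ.image xs
  have hX : X ⊆ range (L + 1) :=
    image_subset_iff.mpr fun i _ => mem_range.mpr (Nat.lt_succ_of_le (hxsL i))
  have hXk : #X = k := by rw [card_image_of_injective _ hxs.injective, card_fin]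
  have hZ := sum_opeWeight_superset hNL hw hdeg horth (empty_subset _) (Nat.zero_le N)
  rw [principalMinor_empty, mul_one, filter_true_of_mem fun A _ => empty_subset A] at hZ
  have hfilter : ∀ A : Finset ℕ, (∀ i, xs i ∈ A) ↔ X ⊆ A := by
    simp [X, image_subset_iff]
  simp_rw [hfilter, hZ, det_kernelMatrix_eq_principalMinor _ hxs.injective]
  rcases le_or_gt k N with hkN | hNk
  · rw [sum_opeWeight_superset hNL hw hdeg horth hX (hXk ▸ hkN),
      mul_div_cancel_left₀ _ (prod_weightedSqNorm_div_leadingCoeff_sq_pos hNL hw hdeg).ne']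
  · have hempty : {A ∈ (range (L + 1)).powersetCard N | X ⊆ A} = ∅ :=
      filter_false_of_mem fun A hA hXA => by
        have := card_le_card hXA
        rw [hXk, (mem_powersetCard.mp hA).2] at this
        omega
    rw [hempty, sum_empty, zero_div, principalMinor_cdKernel_eq_zero hw hX (hXk ▸ hNk)]

/-- Correlation functions of a discrete orthogonal polynomial ensemble on `{0,…,L}` are
determinants of the Christoffel–Darboux kernel. -/
theorem stmt_2 (L N : ℕ) (hN1 : 1 ≤ N) (hNL : N ≤ L + 1)
    (w : ℕ → ℝ) (hw : ∀ x ≤ L, 0 < w x)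
    (p : ℕ → Polynomial ℝ) (hdeg : ∀ n ≤ L, (p n).degree = (n : ℕ))
    (horth : ∀ m ≤ L, ∀ n ≤ L, m ≠ n →
      ∑ x ∈ Finset.range (L + 1), w x * (p m).eval (x : ℝ) * (p n).eval (x : ℝ) = 0)
    (k : ℕ) (xs : Fin k → ℕ) (hxs : StrictMono xs) (hxsL : ∀ i, xs i ≤ L) :
    (∑ A ∈ ((Finset.range (L + 1)).powersetCard N).filter (fun A => ∀ i, xs i ∈ A),
        opeWeight w A)
      / (∑ A ∈ (Finset.range (L + 1)).powersetCard N, opeWeight w A)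
    = Matrix.det (Matrix.of fun i j : Fin k => cdKernel L N w p (xs i) (xs j)) :=
  stmt_2_general L N hNL w hw p hdeg horth k xs hxs hxsL
end

section
/- Let k ∈ ℕ and let α, β, M, x be real numbers such that (−M)_i ≠ 0, (−(M−1))_i ≠ 0 and (α+1)_i ≠ 0 for all 0 ≤ i ≤ k. Then x·Q_k(x−1; α, β, M−1) + (M−x)·Q_k(x; α, β, M−1) = M·Q_k(x; α, β, M). -/
/-- The Pochhammer symbol `(a)_i = a(a+1)⋯(a+i−1)`, with `(a)_0 = 1`. -/
noncomputable def poch (a : ℝ) (i : ℕ) : ℝ := ∏ j ∈ Finset.range i, (a + j)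

/-- The Hahn polynomial
`Q_k(x; α, β, M) = Σ_{i=0}^{k} (−k)_i (−x)_i (k+α+β+1)_i / ((−M)_i (α+1)_i i!)`. -/
noncomputable def hahnQ (k : ℕ) (x α β M : ℝ) : ℝ :=
  ∑ i ∈ Finset.range (k + 1),
    poch (-(k : ℝ)) i * poch (-x) i * poch ((k : ℝ) + α + β + 1) i /
      (poch (-M) i * poch (α + 1) i * (Nat.factorial i : ℝ))

/-!
Both sides are compared term by term. The only input is the identity
`y (1 - y)_i = (y - i) (-y)_i`, obtained by peeling off the first and the last factor of
`(-y)_{i+1}`. Applied to `y = x` it turns the left-hand term into `(M - i) (-x)_i / (1 - M)_i`,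
and applied to `y = M` it turns this into `M (-x)_i / (-M)_i`.
-/

lemma poch_succ (a : ℝ) (i : ℕ) : poch a (i + 1) = poch a i * (a + i) :=
  Finset.prod_range_succ _ _

lemma poch_succ' (a : ℝ) (i : ℕ) : poch a (i + 1) = poch (a + 1) i * a := by
  simp only [poch, Finset.prod_range_succ', Nat.cast_add, Nat.cast_one, Nat.cast_zero, add_zero]
  congr 1
  exact Finset.prod_congr rfl fun j _ => by ring

lemma mul_poch_neg_sub_one (y : ℝ) (i : ℕ) :
    y * poch (-(y - 1)) i = (y - i) * poch (-y) i := by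
  have h := (poch_succ' (-y) i).symm.trans (poch_succ (-y) i)
  rw [show -y + 1 = -(y - 1) by ring] at h
  linear_combination -h

lemma hahn_term_contiguous {M : ℝ} {i : ℕ} (hM : poch (-M) i ≠ 0)
    (hM' : poch (-(M - 1)) i ≠ 0) (x : ℝ) :
    x * (poch (-(x - 1)) i / poch (-(M - 1)) i) + (M - x) * (poch (-x) i / poch (-(M - 1)) i)
      = M * (poch (-x) i / poch (-M) i) := by
  calc _ = (x * poch (-(x - 1)) i + (M - x) * poch (-x) i) / poch (-(M - 1)) i := by ring
    _ = (M - i) * poch (-x) i / poch (-(M - 1)) i := by rw [mul_poch_neg_sub_one]; ring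
    _ = M * (poch (-x) i / poch (-M) i) := by
      field_simp
      linear_combination -poch (-x) i * mul_poch_neg_sub_one M i

theorem stmt_5_general (k : ℕ) (α β M x : ℝ)
    (h1 : ∀ i ≤ k, poch (-M) i ≠ 0)
    (h2 : ∀ i ≤ k, poch (-(M - 1)) i ≠ 0) :
    x * hahnQ k (x - 1) α β (M - 1) + (M - x) * hahnQ k x α β (M - 1)
      = M * hahnQ k x α β M := by
  unfold hahnQ
  simp only [Finset.mul_sum, ← Finset.sum_add_distrib]
  refine Finset.sum_congr rfl fun i hi => ?_
  have hik : i ≤ k := Nat.lt_succ_iff.mp (Finset.mem_range.mp hi)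
  linear_combination
    poch (-(k : ℝ)) i * poch ((k : ℝ) + α + β + 1) i / (poch (α + 1) i * (Nat.factorial i : ℝ))
      * hahn_term_contiguous (h1 i hik) (h2 i hik) x

theorem stmt_5 (k : ℕ) (α β M x : ℝ)
    (h1 : ∀ i ≤ k, poch (-M) i ≠ 0)
    (h2 : ∀ i ≤ k, poch (-(M - 1)) i ≠ 0)
    (h3 : ∀ i ≤ k, poch (α + 1) i ≠ 0) :
    x * hahnQ k (x - 1) α β (M - 1) + (M - x) * hahnQ k x α β (M - 1)
      = M * hahnQ k x α β M :=
  stmt_5_general k α β M x h1 h2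
end

section
/- Let x₁ < x₂ < ⋯ < x_N and y₁ < y₂ < ⋯ < y_N be integers and let a₁,…,a_N, b₁,…,b_N be real numbers. Consider the N×N matrix A with entries A_{ij} = a_i if y_j = x_i+1, A_{ij} = b_i if y_j = x_i, and A_{ij} = 0 otherwise. If y_i − x_i ∈ {0,1} for all i, then det A = ∏_{i : y_i = x_i+1} a_i · ∏_{i : y_i = x_i} b_i. If y_i − x_i ∉ {0,1} for some i, then det A = 0. -/
open Finset

private lemma pigeon_ge {N : ℕ} (σ : Equiv.Perm (Fin N)) (i : Fin N) :
    ∃ j, i ≤ j ∧ σ j ≤ i := by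
  by_contra h
  push_neg at h
  have hsub : (Finset.Ici i).image σ ⊆ Finset.Ioi i := by
    intro k hk
    simp only [Finset.mem_image, Finset.mem_Ici] at hk
    obtain ⟨j, hj, rfl⟩ := hk
    exact Finset.mem_Ioi.2 (h j hj)
  have hcard := Finset.card_le_card hsub
  rw [Finset.card_image_of_injective _ σ.injective, Fin.card_Ici, Fin.card_Ioi] at hcard
  have hi : (i : ℕ) < N := i.isLt
  omega

private lemma pigeon_le {N : ℕ} (σ : Equiv.Perm (Fin N)) (i : Fin N) :
    ∃ j, j ≤ i ∧ i ≤ σ j := by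
  obtain ⟨j, hj1, hj2⟩ := pigeon_ge σ⁻¹ i
  exact ⟨σ⁻¹ j, hj2, by simpa using hj1⟩

private lemma good_det : ∀ (N : ℕ) (x y : Fin N → ℤ), StrictMono x → StrictMono y →
    ∀ (a b : Fin N → ℝ) (A : Matrix (Fin N) (Fin N) ℝ),
    (∀ i j, A i j = if y j = x i + 1 then a i else if y j = x i then b i else 0) →
    (∀ i, y i = x i ∨ y i = x i + 1) →
    A.det = ∏ i, (if y i = x i + 1 then a i else b i) := by
  intro N
  induction N with
  | zero => intro x y _ _ a b A _ _; simp [Matrix.det_fin_zero]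
  | succ n ih =>
    intro x y hx hy a b A hA hgood
    have hsub : (A.submatrix Fin.succ Fin.succ).det =
        ∏ i : Fin n, (if y (Fin.succ i) = x (Fin.succ i) + 1 then a (Fin.succ i)
          else b (Fin.succ i)) := by
      apply ih (x ∘ Fin.succ) (y ∘ Fin.succ) (hx.comp Fin.strictMono_succ)
        (hy.comp Fin.strictMono_succ)
      · intro i j; exact hA _ _
      · intro i; exact hgood _
    rcases hgood 0 with h0 | h0
    · -- y 0 = x 0 : column 0 has its only nonzero entry at row 0
      rw [Matrix.det_succ_column_zero]
      have hzero : ∀ i : Fin (n + 1), i ≠ 0 → A i 0 = 0 := by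
        intro i hi
        have hxi : x 0 < x i := hx (Fin.pos_of_ne_zero hi)
        rw [hA]
        rw [if_neg (by omega), if_neg (by omega)]
      rw [Finset.sum_eq_single 0]
      · have hA00 : A 0 0 = b 0 := by
          rw [hA]
          rcases eq_or_ne (y 0) (x 0 + 1) with h | h
          · omega
          · rw [if_neg h, if_pos h0]
        have h1 : ¬ y 0 = x 0 + 1 := by omega
        rw [hA00, Fin.succAbove_zero, hsub, Fin.prod_univ_succ, if_neg h1]
        simp
      · intro i _ hi
        rw [hzero i hi]; ring
      · intro h; exact absurd (Finset.mem_univ 0) h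
    · -- y 0 = x 0 + 1 : row 0 has its only nonzero entry at column 0
      rw [Matrix.det_succ_row_zero]
      have hzero : ∀ j : Fin (n + 1), j ≠ 0 → A 0 j = 0 := by
        intro j hj
        have hyj : y 0 < y j := hy (Fin.pos_of_ne_zero hj)
        rw [hA]
        rw [if_neg (by omega), if_neg (by omega)]
      rw [Finset.sum_eq_single 0]
      · have hA00 : A 0 0 = a 0 := by rw [hA, if_pos h0]
        rw [hA00, Fin.succAbove_zero, hsub, Fin.prod_univ_succ, if_pos h0]
        simp
      · intro j _ hj
        rw [hzero j hj]; ring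
      · intro h; exact absurd (Finset.mem_univ 0) h

/-- Determinant of the two-diagonal transition matrix: `A i j = a i` if `y j = x i + 1`,
`A i j = b i` if `y j = x i`, and `A i j = 0` otherwise, for increasing integer
sequences `x` and `y`. -/
theorem stmt_10 (N : ℕ) (x y : Fin N → ℤ) (hx : StrictMono x) (hy : StrictMono y)
    (a b : Fin N → ℝ) (A : Matrix (Fin N) (Fin N) ℝ)
    (hA : ∀ i j, A i j =
      if y j = x i + 1 then a i else if y j = x i then b i else 0) :
    ((∀ i, y i = x i ∨ y i = x i + 1) →
      A.det = (∏ i ∈ Finset.univ.filter (fun i => y i = x i + 1), a i) *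
              ∏ i ∈ Finset.univ.filter (fun i => y i = x i), b i)
    ∧ ((∃ i, ¬(y i = x i ∨ y i = x i + 1)) → A.det = 0) := by
  constructor
  · intro hgood
    rw [good_det N x y hx hy a b A hA hgood]
    rw [Finset.prod_filter, Finset.prod_filter, ← Finset.prod_mul_distrib]
    apply Finset.prod_congr rfl
    intro i _
    rcases hgood i with h | h
    · have h1 : ¬ y i = x i + 1 := by omega
      rw [if_neg h1, if_neg h1, if_pos h]
      ring
    · have h1 : ¬ y i = x i := by omega
      rw [if_pos h, if_pos h, if_neg h1]
      ring
  · rintro ⟨i, hi⟩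
    push_neg at hi
    rw [Matrix.det_apply]
    apply Finset.sum_eq_zero
    intro σ _
    rcases lt_or_gt_of_ne hi.1 with hlt | hgt
    · -- y i < x i
      obtain ⟨j, hj1, hj2⟩ := pigeon_le σ i
      have h1 : y j ≤ y i := hy.monotone hj1
      have h2 : x i ≤ x (σ j) := hx.monotone hj2
      have hz : A (σ j) j = 0 := by
        rw [hA, if_neg (by omega), if_neg (by omega)]
      rw [show (∏ k, A (σ k) k) = 0 from Finset.prod_eq_zero (Finset.mem_univ j) hz, smul_zero]
    · -- y i > x i, and y i ≠ x i + 1, so y i ≥ x i + 2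
      have hyi : x i + 2 ≤ y i := by
        have := hi.2; omega
      obtain ⟨j, hj1, hj2⟩ := pigeon_ge σ i
      have h1 : y i ≤ y j := hy.monotone hj1
      have h2 : x (σ j) ≤ x i := hx.monotone hj2
      have hz : A (σ j) j = 0 := by
        rw [hA, if_neg (by omega), if_neg (by omega)]
      rw [show (∏ k, A (σ k) k) = 0 from Finset.prod_eq_zero (Finset.mem_univ j) hz, smul_zero]
end

section
/- Let Ñ, S̃, T̃ > 0 be reals with S̃ ≤ T̃, and let (t̃, x̃) satisfy x̃ > 0, S̃+Ñ−x̃ > 0, t̃+Ñ−x̃ > 0 and x̃+T̃−S̃−t̃ > 0. Then the polynomial identity ( −Ñ(Ñ+T̃) + (S̃+Ñ−x̃)(t̃+Ñ−x̃) + x̃(T̃+x̃−S̃−t̃) )² − 4·x̃(S̃+Ñ−x̃)(t̃+Ñ−x̃)(x̃+T̃−S̃−t̃) = E(t̃,x̃) holds, where E(t̃,x̃) = T̃²x̃² + (S̃+Ñ)²t̃² + 2x̃t̃(ÑT̃−S̃T̃−2S̃Ñ) + 2t̃(S̃Ñ² − ÑT̃S̃ − Ñ²T̃ + S̃²Ñ)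 + 2x̃(ÑT̃S̃ − ÑT̃²) + Ñ²(T̃−S̃)². Consequently, with D = ( −Ñ(Ñ+T̃) + (S̃+Ñ−x̃)(t̃+Ñ−x̃) + x̃(T̃+x̃−S̃−t̃) ) / ( 2√( x̃(S̃+Ñ−x̃)(t̃+Ñ−x̃)(x̃+T̃−S̃−t̃) ) ), one has D² ≥ 1 if and only if E(t̃,x̃) ≥ 0: the limit density φ/π (φ = arccos D, clipped to 0 or π when |D| > 1) is trivial (equal to 0 or 1) exactly on and outside the ellipse E(t̃,x̃) = 0 inscribed in the hexagon, and nontrivial exactly in its interior E(t̃,x̃) < 0. -/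
/-!
Writing `D = A / (2 √P)` with `A` the numerator and `P = x (S̃+Ñ-x) (t+Ñ-x) (x+T̃-S̃-t) > 0`, the condition `D² ≥ 1` is
`A² - 4P ≥ 0`, and `A² - 4P` expands to `E(t, x)`. The clipped arccosine is `0` or `π` exactly
when `|D| ≥ 1`, since `arccos` takes these values only at `±1`.
-/

/-- The quadratic polynomial whose zero set is the inscribed ellipse (frozen boundary). -/
noncomputable def ellipseE (Nt St Tt t x : ℝ) : ℝ :=
  Tt ^ 2 * x ^ 2 + (St + Nt) ^ 2 * t ^ 2 + 2 * x * t * (Nt * Tt - St * Tt - 2 * St * Nt)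
    + 2 * t * (St * Nt ^ 2 - Nt * Tt * St - Nt ^ 2 * Tt + St ^ 2 * Nt)
    + 2 * x * (Nt * Tt * St - Nt * Tt ^ 2) + Nt ^ 2 * (Tt - St) ^ 2

/-- The quantity `D` whose arccosine gives the angle `φ` of the discrete sine kernel. -/
noncomputable def Dval (Nt St Tt t x : ℝ) : ℝ :=
  (-(Nt * (Nt + Tt)) + (St + Nt - x) * (t + Nt - x) + x * (Tt + x - St - t)) /
    (2 * Real.sqrt (x * (St + Nt - x) * (t + Nt - x) * (x + Tt - St - t)))

/-- The angle `φ`: `arccos D` clipped to `0` when `D > 1` and to `π` when `D < −1`. -/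
noncomputable def phiVal (Nt St Tt t x : ℝ) : ℝ :=
  if 1 < Dval Nt St Tt t x then 0
  else if Dval Nt St Tt t x < -1 then Real.pi
  else Real.arccos (Dval Nt St Tt t x)

open Real

lemma discriminant_eq_ellipseE (Nt St Tt t x : ℝ) :
    (-(Nt * (Nt + Tt)) + (St + Nt - x) * (t + Nt - x) + x * (Tt + x - St - t)) ^ 2
      - 4 * (x * (St + Nt - x) * (t + Nt - x) * (x + Tt - St - t)) = ellipseE Nt St Tt t x := by
  unfold ellipseE; ring

lemma one_le_sq_div_two_mul_sqrt_iff {a p : ℝ} (hp : 0 < p) :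
    1 ≤ (a / (2 * √p)) ^ 2 ↔ 0 ≤ a ^ 2 - 4 * p := by
  have hsq : (a / (2 * √p)) ^ 2 = a ^ 2 / (4 * p) := by
    rw [div_pow, mul_pow, sq_sqrt hp.le]; norm_num
  rw [hsq, one_le_div (by positivity), sub_nonneg]

noncomputable def clippedArccos (d : ℝ) : ℝ :=
  if 1 < d then 0 else if d < -1 then π else arccos d

lemma phiVal_eq_clippedArccos (Nt St Tt t x : ℝ) :
    phiVal Nt St Tt t x = clippedArccos (Dval Nt St Tt t x) := rfl

lemma clippedArccos_eq_zero_or_pi_iff (d : ℝ) :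
    clippedArccos d = 0 ∨ clippedArccos d = π ↔ 1 ≤ d ^ 2 := by
  rw [one_le_sq_iff_one_le_abs, le_abs, le_neg]
  unfold clippedArccos
  split_ifs with hgt hlt
  · exact ⟨fun _ => Or.inl hgt.le, fun _ => Or.inl rfl⟩
  · exact ⟨fun _ => Or.inr hlt.le, fun _ => Or.inr rfl⟩
  · rw [arccos_eq_zero, arccos_eq_pi]

theorem stmt_15_general (Nt St Tt t x : ℝ)
    (hx : 0 < x) (h1 : 0 < St + Nt - x) (h2 : 0 < t + Nt - x) (h3 : 0 < x + Tt - St - t) :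
    ((-(Nt * (Nt + Tt)) + (St + Nt - x) * (t + Nt - x) + x * (Tt + x - St - t)) ^ 2
        - 4 * (x * (St + Nt - x) * (t + Nt - x) * (x + Tt - St - t)) = ellipseE Nt St Tt t x)
    ∧ (1 ≤ (Dval Nt St Tt t x) ^ 2 ↔ 0 ≤ ellipseE Nt St Tt t x)
    ∧ ((phiVal Nt St Tt t x = 0 ∨ phiVal Nt St Tt t x = Real.pi)
        ↔ 0 ≤ ellipseE Nt St Tt t x) := by
  have hP : 0 < x * (St + Nt - x) * (t + Nt - x) * (x + Tt - St - t) := by positivity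
  have hD : 1 ≤ (Dval Nt St Tt t x) ^ 2 ↔ 0 ≤ ellipseE Nt St Tt t x := by
    rw [Dval, one_le_sq_div_two_mul_sqrt_iff hP, discriminant_eq_ellipseE]
  refine ⟨discriminant_eq_ellipseE Nt St Tt t x, hD, ?_⟩
  rw [phiVal_eq_clippedArccos, clippedArccos_eq_zero_or_pi_iff, hD]

theorem stmt_15 (Nt St Tt t x : ℝ)
    (hN : 0 < Nt) (hS : 0 < St) (hT : 0 < Tt) (hST : St ≤ Tt)
    (hx : 0 < x) (h1 : 0 < St + Nt - x) (h2 : 0 < t + Nt - x) (h3 : 0 < x + Tt - St - t) :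
    ((-(Nt * (Nt + Tt)) + (St + Nt - x) * (t + Nt - x) + x * (Tt + x - St - t)) ^ 2
        - 4 * (x * (St + Nt - x) * (t + Nt - x) * (x + Tt - St - t)) = ellipseE Nt St Tt t x)
    ∧ (1 ≤ (Dval Nt St Tt t x) ^ 2 ↔ 0 ≤ ellipseE Nt St Tt t x)
    ∧ ((phiVal Nt St Tt t x = 0 ∨ phiVal Nt St Tt t x = Real.pi)
        ↔ 0 ≤ ellipseE Nt St Tt t x) :=
  stmt_15_general Nt St Tt t x hx h1 h2 h3
end
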